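/- Let r_u be random rewards with |r_u| ≤ α a.s., let γ ∈ [0,1), and let h ~ Geom(1-√γ) be independent of the rewards (P(h = k) = (1-√γ)·γ^{k/2} for k ≥ 0, so P(h ≥ k) = γ^{k/2}). Then E[Σ_{u=0}^{h} γ^{u/2}·r_u] = Σ_{u=0}^∞ γ^u·E[r_u], where the series converges absolutely. -/

import Mathlib

/-!
Write `s = √γ`, so that `γ ^ (u / 2) = s ^ u` and `P(h ≥ u) = s ^ u`. Summing over the random
horizon is summing `1{u ≤ h} · s ^ u · r_u` over all `u`; the terms are dominated by the summable
`s ^ u · α`, so expectation and sum commute. Independence then factors each term as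
`P(h ≥ u) · s ^ u · E[r_u] = γ ^ u · E[r_u]`.
-/

open MeasureTheory ProbabilityTheory

section

variable {Ω : Type*} [MeasurableSpace Ω] {μ : Measure Ω}

theorem abs_integral_le_of_ae_abs_le [IsProbabilityMeasure μ] {f : Ω → ℝ} {C : ℝ}
    (hf : ∀ᵐ ω ∂μ, |f ω| ≤ C) : |∫ ω, f ω ∂μ| ≤ C := by
  simpa using norm_integral_le_of_norm_le_const (μ := μ) (f := f) (by simpa using hf)

theorem ProbabilityTheory.IndepFun.integral_indicator_preimage {β : Type*} [MeasurableSpace β]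
    {h : Ω → β} {X : Ω → ℝ} (hhX : IndepFun h X μ) (hh : Measurable h) (hX : AEStronglyMeasurable X μ)
    {S : Set β} (hS : MeasurableSet S) :
    ∫ ω, (h ⁻¹' S).indicator X ω ∂μ = μ.real (h ⁻¹' S) * ∫ ω, X ω ∂μ := by
  have hind : Measurable (S.indicator (1 : β → ℝ)) := measurable_one.indicator hS
  have hfactor : (h ⁻¹' S).indicator X = (S.indicator 1 ∘ h) * X := by
    ext ω
    by_cases hω : h ω ∈ S <;> simp [hω]
  rw [hfactor, ← integral_indicator_one (hh hS)]
  exact (hhX.comp hind measurable_id).integral_mul_eq_mul_integral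
    (hind.comp hh).aestronglyMeasurable hX

theorem integral_sum_range_succ_eq_tsum_integral_indicator {E : Type*} [NormedAddCommGroup E]
    [NormedSpace ℝ E] [IsFiniteMeasure μ] {f : ℕ → Ω → E} {c : ℕ → ℝ} {h : Ω → ℕ}
    (hh : Measurable h) (hf : ∀ u, AEStronglyMeasurable (f u) μ)
    (hfc : ∀ u, ∀ᵐ ω ∂μ, ‖f u ω‖ ≤ c u) (hc : Summable c) :
    ∫ ω, ∑ u ∈ Finset.range (h ω + 1), f u ω ∂μ =
      ∑' u, ∫ ω, (h ⁻¹' Set.Ici u).indicator (f u) ω ∂μ := by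
  have hpointwise : ∀ ω, ∑ u ∈ Finset.range (h ω + 1), f u ω =
      ∑' u, (h ⁻¹' Set.Ici u).indicator (f u) ω := by
    intro ω
    rw [tsum_eq_sum (s := Finset.range (h ω + 1)) fun u hu => by
      simp only [Finset.mem_range, not_lt] at hu
      simp [Set.indicator_of_notMem, show ¬u ≤ h ω by omega]]
    refine Finset.sum_congr rfl fun u hu => ?_
    simp only [Finset.mem_range] at hu
    simp [show u ≤ h ω by omega]
  have hint : ∀ u, Integrable ((h ⁻¹' Set.Ici u).indicator (f u)) μ := fun u =>
    (Integrable.of_bound (hf u) (c u) (hfc u)).indicator (hh measurableSet_Ici)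
  have hnorm : ∀ u, ∫ ω, ‖(h ⁻¹' Set.Ici u).indicator (f u) ω‖ ∂μ ≤ c u * μ.real Set.univ := by
    intro u
    refine (Real.le_norm_self _).trans (norm_integral_le_of_norm_le_const ?_)
    filter_upwards [hfc u] with ω hω
    rw [norm_norm, norm_indicator_eq_indicator_norm]
    exact le_trans (Set.indicator_le_self' (fun _ _ => norm_nonneg _) ω) hω
  rw [integral_tsum_of_summable_integral_norm hint
    (.of_nonneg_of_le (fun u => integral_nonneg fun _ => norm_nonneg _) hnorm (hc.mul_right _))]
  exact integral_congr_ae (.of_forall hpointwise)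

end

theorem stmt_11_general {Ω : Type*} [MeasureSpace Ω] [IsProbabilityMeasure (ℙ : Measure Ω)]
    (r : ℕ → Ω → ℝ) (α γ : ℝ) (hγ0 : 0 ≤ γ) (hγ1 : γ < 1)
    (hr : ∀ u, Integrable (r u) ℙ) (hrb : ∀ u, ∀ᵐ ω ∂ℙ, |r u ω| ≤ α)
    (h : Ω → ℕ) (hhm : Measurable h)
    (hdist : ∀ k : ℕ, ℙ {ω | k ≤ h ω} = ENNReal.ofReal (γ ^ ((k : ℝ) / 2)))
    (hindep : ∀ u, IndepFun h (r u) ℙ) :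
    (∫ ω, ∑ u ∈ Finset.range (h ω + 1), γ ^ ((u : ℝ) / 2) * r u ω) =
      (∑' u : ℕ, γ ^ u * ∫ ω, r u ω) ∧
      Summable (fun u : ℕ => |γ ^ u * ∫ ω, r u ω|) := by
  set s := √γ
  have hpow (u : ℕ) : γ ^ ((u : ℝ) / 2) = s ^ u := by
    rw [Real.rpow_div_two_eq_sqrt _ hγ0, Real.rpow_natCast]
  have hs1 : s < 1 := (Real.sqrt_lt' one_pos).2 (by simpa using hγ1)
  have htail (u : ℕ) : (ℙ : Measure Ω).real (h ⁻¹' Set.Ici u) = s ^ u := by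
    change ((ℙ : Measure Ω) {ω | u ≤ h ω}).toReal = s ^ u
    rw [← hpow, hdist u, ENNReal.toReal_ofReal (Real.rpow_nonneg hγ0 _)]
  simp_rw [hpow]
  refine ⟨?_, .of_nonneg_of_le (fun _ => abs_nonneg _) (fun u => ?_)
    ((summable_geometric_of_lt_one hγ0 hγ1).mul_right α)⟩
  · rw [integral_sum_range_succ_eq_tsum_integral_indicator hhm
      (fun u => ((hr u).const_mul _).aestronglyMeasurable) (c := fun u => s ^ u * α)
      (fun u => by
        filter_upwards [hrb u] with ω hω
        rw [norm_mul, norm_pow, Real.norm_of_nonneg (Real.sqrt_nonneg γ), Real.norm_eq_abs]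
        gcongr)
      ((summable_geometric_of_lt_one (Real.sqrt_nonneg γ) hs1).mul_right α)]
    refine tsum_congr fun u => ?_
    have hindep' : IndepFun h (fun ω => s ^ u * r u ω) ℙ :=
      (hindep u).comp measurable_id (measurable_const_mul _)
    rw [hindep'.integral_indicator_preimage hhm
      ((hr u).const_mul _).aestronglyMeasurable measurableSet_Ici, htail, integral_const_mul,
      ← mul_assoc, ← mul_pow, Real.mul_self_sqrt hγ0]
  · rw [abs_mul, abs_of_nonneg (pow_nonneg hγ0 u)]
    exact mul_le_mul_of_nonneg_left (abs_integral_le_of_ae_abs_le (hrb u)) (pow_nonneg hγ0 u)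

/-- Unbiasedness of the geometric-horizon Q-estimator: if `|r_u| ≤ α` a.s., `γ ∈ [0,1)`,
and `h` has `P(h ≥ k) = γ^{k/2}` and is independent of each reward, then
`E[∑_{u=0}^h γ^{u/2} r_u] = ∑_u γ^u E[r_u]`, the series converging absolutely. -/
theorem stmt_11 {Ω : Type*} [MeasureSpace Ω] [IsProbabilityMeasure (ℙ : Measure Ω)]
    (r : ℕ → Ω → ℝ) (α γ : ℝ) (hα : 0 ≤ α) (hγ0 : 0 ≤ γ) (hγ1 : γ < 1)
    (hr : ∀ u, Integrable (r u) ℙ) (hrb : ∀ u, ∀ᵐ ω ∂ℙ, |r u ω| ≤ α)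
    (h : Ω → ℕ) (hhm : Measurable h)
    (hdist : ∀ k : ℕ, ℙ {ω | k ≤ h ω} = ENNReal.ofReal (γ ^ ((k : ℝ) / 2)))
    (hindep : ∀ u, IndepFun h (r u) ℙ) :
    (∫ ω, ∑ u ∈ Finset.range (h ω + 1), γ ^ ((u : ℝ) / 2) * r u ω) =
      (∑' u : ℕ, γ ^ u * ∫ ω, r u ω) ∧
      Summable (fun u : ℕ => |γ ^ u * ∫ ω, r u ω|) :=
  stmt_11_general r α γ hγ0 hγ1 hr hrb h hhm hdist hindep
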